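/- arXiv:2208.13611 — 2 statements merged into one kernel-verified Lean document; each statement's English description precedes it below -/
import Mathlib

section
/- Let K be a linearly ordered field, let L be a totally positive lower triangular n×n matrix over K and let U be a totally positive upper triangular n×n matrix over K. Then both products L·U and U·L are totally positive, i.e., every minor of L·U and every minor of U·L is strictly positive. -/
/-- A matrix is totally positive if all its minors are strictly positive. -/
def IsTotallyPositive {K : Type*} [Field K] [LinearOrder K] [IsStrictOrderedRing K] {n : ℕ}
    (A : Matrix (Fin n) (Fin n) K) : Prop :=
  ∀ (p : ℕ) (r c : Fin p → Fin n), StrictMono r → StrictMono c →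
    0 < (A.submatrix r c).det

/-- An upper triangular matrix is totally positive upper triangular if every minor on rows
`i₁ < … < i_p` and columns `j₁ < … < j_p` with `i_k ≤ j_k` for all `k` is strictly positive. -/
def IsTotallyPositiveUpper {K : Type*} [Field K] [LinearOrder K] [IsStrictOrderedRing K] {n : ℕ}
    (A : Matrix (Fin n) (Fin n) K) : Prop :=
  (∀ i j : Fin n, j < i → A i j = 0) ∧
  ∀ (p : ℕ) (r c : Fin p → Fin n), StrictMono r → StrictMono c → (∀ k, r k ≤ c k) →
    0 < (A.submatrix r c).det

/-- A lower triangular matrix is totally positive lower triangular if every minor on rows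
`i₁ < … < i_p` and columns `j₁ < … < j_p` with `i_k ≥ j_k` for all `k` is strictly positive. -/
def IsTotallyPositiveLower {K : Type*} [Field K] [LinearOrder K] [IsStrictOrderedRing K] {n : ℕ}
    (A : Matrix (Fin n) (Fin n) K) : Prop :=
  (∀ i j : Fin n, i < j → A i j = 0) ∧
  ∀ (p : ℕ) (r c : Fin p → Fin n), StrictMono r → StrictMono c → (∀ k, c k ≤ r k) →
    0 < (A.submatrix r c).det

/-!
By Cauchy–Binet, the minor of `A * B` on rows `r` and columns `c` is the sum over strictly
increasing `f` of `det A[r, f] * det B[f, c]`. For a totally positive triangular matrix every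
minor is nonnegative: those not of the prescribed shape vanish by triangularity. Hence each
term is nonnegative, and the choice `f = min r c` (for `L * U`) or `f = max r c` (for `U * L`)
makes both factors minors of the prescribed shape, so that term is positive.
-/

open Matrix Finset Equiv

section Order
variable {α β : Type*} [Preorder α] [LinearOrder β] {f g : α → β}

theorem StrictMono.min (hf : StrictMono f) (hg : StrictMono g) :
    StrictMono fun a => min (f a) (g a) :=
  fun _ _ h => lt_min ((min_le_left _ _).trans_lt (hf h)) ((min_le_right _ _).trans_lt (hg h))

theorem StrictMono.max (hf : StrictMono f) (hg : StrictMono g) :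
    StrictMono fun a => max (f a) (g a) :=
  fun _ _ h => max_lt ((hf h).trans_le (le_max_left _ _)) ((hg h).trans_le (le_max_right _ _))

end Order

theorem Fin.exists_le_and_perm_apply_le {p : ℕ} (σ : Perm (Fin p)) (k : Fin p) :
    ∃ i, k ≤ i ∧ σ i ≤ k := by
  by_contra! h
  have hcard := card_le_card_of_injOn σ (t := Ioi k) (fun i hi => mem_Ioi.2 (h i (mem_Ici.1 hi)))
    σ.injective.injOn
  rw [Fin.card_Ici, Fin.card_Ioi] at hcard
  omega

section Sorting
variable {α : Type*} [LinearOrder α] {p : ℕ}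

theorem injOn_strictMono_comp_perm :
    Set.InjOn (fun x : (Fin p → α) × Perm (Fin p) => x.1 ∘ x.2) {x | StrictMono x.1} := by
  rintro ⟨f, σ⟩ hf ⟨f', σ'⟩ hf' (h : f ∘ σ = f' ∘ σ')
  have hrange : Set.range f = Set.range f' := by
    rw [← σ.surjective.range_comp, h, σ'.surjective.range_comp]
  obtain rfl : f = f' := (StrictMono.range_inj hf hf').1 hrange
  exact Prod.ext rfl (Equiv.ext fun i => hf.injective (congrFun h i))

theorem Function.Injective.exists_strictMono_comp_perm_eq {g : Fin p → α}
    (hg : Function.Injective g) :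
    ∃ f : Fin p → α, StrictMono f ∧ ∃ σ : Perm (Fin p), f ∘ σ = g :=
  ⟨g ∘ Tuple.sort g,
    (Tuple.monotone_sort g).strictMono_of_injective (hg.comp (Tuple.sort g).injective),
    (Tuple.sort g)⁻¹, by ext; simp⟩

end Sorting

namespace Matrix
variable {R : Type*} [CommRing R]

theorem det_mul_eq_sum_prod_mul_det_submatrix {m ι : Type*} [Fintype m] [DecidableEq m]
    [Fintype ι] [DecidableEq ι] (A : Matrix m ι R) (B : Matrix ι m R) :
    (A * B).det = ∑ g : m → ι, (∏ i, A i (g i)) * (B.submatrix g id).det := by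
  have hrows : A * B = fun i => ∑ k, A i k • B k := by
    ext i j
    simp [mul_apply, Finset.sum_apply]
  let D := (detRowAlternating : (m → R) [⋀^m]→ₗ[R] R).toMultilinearMap
  change D (A * B) = _
  rw [hrows, D.map_sum]
  refine sum_congr rfl fun g _ => ?_
  rw [D.map_smul_univ, smul_eq_mul]
  rfl

/-- The Cauchy–Binet formula. -/
theorem det_mul_eq_sum_det_submatrix_mul_det_submatrix {ι : Type*} [Fintype ι] [LinearOrder ι]
    {p : ℕ} (A : Matrix (Fin p) ι R) (B : Matrix ι (Fin p) R) :
    (A * B).det = ∑ f ∈ univ.filter (StrictMono ·),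
      (A.submatrix id f).det * (B.submatrix f id).det := by
  set S := univ.filter (fun f : Fin p → ι => StrictMono f)
  set P := S ×ˢ (univ : Finset (Perm (Fin p)))
  have hvanish : ∀ g ∈ univ, g ∉ P.image (fun x => x.1 ∘ x.2) →
      (∏ i, A i (g i)) * (B.submatrix g id).det = 0 := by
    intro g _ hg
    obtain ⟨i, j, hij, hne⟩ : ∃ i j, g i = g j ∧ i ≠ j := by
      by_contra! h
      obtain ⟨f, hf, σ, rfl⟩ := Function.Injective.exists_strictMono_comp_perm_eq h
      exact hg (mem_image.2
        ⟨(f, σ), mem_product.2 ⟨mem_filter.2 ⟨mem_univ _, hf⟩, mem_univ _⟩, rfl⟩)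
    rw [det_zero_of_row_eq hne (by ext; simp [hij]), mul_zero]
  calc (A * B).det = ∑ g, (∏ i, A i (g i)) * (B.submatrix g id).det :=
        det_mul_eq_sum_prod_mul_det_submatrix A B
    _ = ∑ x ∈ P, (∏ i, A i (x.1 (x.2 i))) * (B.submatrix (x.1 ∘ x.2) id).det := by
        rw [← sum_subset (subset_univ _) hvanish, sum_image]
        · rfl
        · exact injOn_strictMono_comp_perm.mono fun x hx =>
            (mem_filter.1 (mem_product.1 hx).1).2
    _ = ∑ f ∈ S, ∑ σ : Perm (Fin p),
          ((Perm.sign σ : R) * ∏ i, A i (f (σ i))) * (B.submatrix f id).det := by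
        rw [sum_product]
        refine sum_congr rfl fun f _ => sum_congr rfl fun σ _ => ?_
        rw [show B.submatrix (f ∘ σ) id = (B.submatrix f id).submatrix σ id from rfl,
          det_permute]
        ring
    _ = _ := by
        refine sum_congr rfl fun f _ => ?_
        rw [← sum_mul]
        congr 1
        rw [← det_transpose, det_apply']
        rfl

theorem det_submatrix_eq_zero_of_lowerTriangular {α : Type*} [LinearOrder α] {p : ℕ}
    {L : Matrix α α R} (hL : ∀ i j, i < j → L i j = 0) {r c : Fin p → α}
    (hr : Monotone r) (hc : Monotone c) {k : Fin p} (hk : r k < c k) :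
    (L.submatrix r c).det = 0 := by
  rw [det_apply']
  refine sum_eq_zero fun σ _ => ?_
  obtain ⟨i, hki, hσi⟩ := Fin.exists_le_and_perm_apply_le σ k
  have hzero : L (r (σ i)) (c i) = 0 := hL _ _ ((hr hσi).trans_lt (hk.trans_le (hc hki)))
  rw [prod_eq_zero (mem_univ i) hzero, mul_zero]

end Matrix

def IsTotallyNonneg {K : Type*} [CommRing K] [PartialOrder K] {n : ℕ}
    (A : Matrix (Fin n) (Fin n) K) : Prop :=
  ∀ (p : ℕ) (r c : Fin p → Fin n), StrictMono r → StrictMono c →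
    0 ≤ (A.submatrix r c).det

theorem IsTotallyNonneg.transpose {K : Type*} [CommRing K] [PartialOrder K] {n : ℕ}
    {A : Matrix (Fin n) (Fin n) K} (hA : IsTotallyNonneg A) : IsTotallyNonneg Aᵀ :=
  fun p r c hr hc => by
    rw [← transpose_submatrix, det_transpose]
    exact hA p c r hc hr

section TotalPositivity
variable {K : Type*} [Field K] [LinearOrder K] [IsStrictOrderedRing K] {n : ℕ}
  {A B L U : Matrix (Fin n) (Fin n) K}

theorem IsTotallyPositiveUpper.transpose (hU : IsTotallyPositiveUpper U) :
    IsTotallyPositiveLower Uᵀ :=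
  ⟨fun i j hij => hU.1 j i hij, fun p r c hr hc h => by
    rw [← transpose_submatrix, det_transpose]
    exact hU.2 p c r hc hr h⟩

theorem IsTotallyPositiveLower.isTotallyNonneg (hL : IsTotallyPositiveLower L) :
    IsTotallyNonneg L := by
  intro p r c hr hc
  by_cases h : ∀ k, c k ≤ r k
  · exact (hL.2 p r c hr hc h).le
  · obtain ⟨k, hk⟩ := not_forall.1 h
    exact (det_submatrix_eq_zero_of_lowerTriangular hL.1 hr.monotone hc.monotone
      (not_le.1 hk)).ge

theorem IsTotallyPositiveUpper.isTotallyNonneg (hU : IsTotallyPositiveUpper U) :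
    IsTotallyNonneg U := by
  simpa using hU.transpose.isTotallyNonneg.transpose

theorem IsTotallyNonneg.isTotallyPositive_mul (hA : IsTotallyNonneg A) (hB : IsTotallyNonneg B)
    (hpos : ∀ (p : ℕ) (r c : Fin p → Fin n), StrictMono r → StrictMono c →
      ∃ f, StrictMono f ∧ 0 < (A.submatrix r f).det ∧ 0 < (B.submatrix f c).det) :
    IsTotallyPositive (A * B) := by
  intro p r c hr hc
  rw [submatrix_mul A B r id c Function.bijective_id,
    det_mul_eq_sum_det_submatrix_mul_det_submatrix]
  obtain ⟨f, hf, hAf, hBf⟩ := hpos p r c hr hc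
  exact sum_pos'
    (fun g hg => mul_nonneg (hA p r g hr (mem_filter.1 hg).2) (hB p g c (mem_filter.1 hg).2 hc))
    ⟨f, mem_filter.2 ⟨mem_univ _, hf⟩, mul_pos hAf hBf⟩

end TotalPositivity

/-- The product of a totally positive lower triangular matrix and a totally positive upper
triangular matrix, in either order, is totally positive. -/
theorem totallyPositive_of_lower_mul_upper {K : Type*} [Field K] [LinearOrder K] [IsStrictOrderedRing K] {n : ℕ}
    (L U : Matrix (Fin n) (Fin n) K)
    (hL : IsTotallyPositiveLower L) (hU : IsTotallyPositiveUpper U) :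
    IsTotallyPositive (L * U) ∧ IsTotallyPositive (U * L) := by
  constructor
  · refine hL.isTotallyNonneg.isTotallyPositive_mul hU.isTotallyNonneg
      fun p r c hr hc => ⟨_, hr.min hc, ?_, ?_⟩
    · exact hL.2 p r _ hr (hr.min hc) fun _ => min_le_left _ _
    · exact hU.2 p _ c (hr.min hc) hc fun _ => min_le_right _ _
  · refine hU.isTotallyNonneg.isTotallyPositive_mul hL.isTotallyNonneg
      fun p r c hr hc => ⟨_, hr.max hc, ?_, ?_⟩
    · exact hU.2 p r _ hr (hr.max hc) fun _ => le_max_left _ _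
    · exact hL.2 p _ c (hr.max hc) hc fun _ => le_max_right _ _
end

section
/- Let K be a linearly ordered field and let A and B be totally positive upper triangular n×n matrices over K of determinant one. Then for every k = 1, …, n−1: (A⁻¹)_{k,n} · ((B·A)⁻¹)_{k+1,n} − ((B·A)⁻¹)_{k,n} · (A⁻¹)_{k+1,n} > 0. -/
open Matrix

theorem Fin.val_succAbove {n : ℕ} (p : Fin (n + 1)) (i : Fin n) :
    (p.succAbove i : ℕ) = if (i : ℕ) < p then (i : ℕ) else i + 1 := by
  unfold Fin.succAbove
  split_ifs <;> simp_all [Fin.lt_def]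

namespace Matrix

variable {R : Type*} [CommRing R]

theorem det_one_updateCol_updateCol {n : Type*} [Fintype n] [DecidableEq n] {i j : n}
    (hij : i ≠ j) (x y : n → R) :
    (((1 : Matrix n n R).updateCol i x).updateCol j y).det = x i * y j - x j * y i := by
  -- a rank-two perturbation of the identity: Weinstein–Aronszajn reduces it to a `2 × 2` determinant
  let U : Matrix (Fin 2) n R := of ![x - Pi.single i 1, y - Pi.single j 1]
  let V : Matrix (Fin 2) n R := of ![Pi.single i 1, Pi.single j 1]
  have hUV : ((1 : Matrix n n R).updateCol i x).updateCol j y = 1 + Uᵀ * V := by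
    ext r c
    simp only [updateCol_apply, add_apply, mul_apply, Fin.sum_univ_two, U, V, of_apply,
      transpose_apply, one_apply]
    split_ifs <;> simp_all
  rw [hUV, det_one_add_mul_comm, det_fin_two]
  simp [U, V, hij, hij.symm]
  ring

theorem det_updateCol_updateCol {n : Type*} [Fintype n] [DecidableEq n] {A : Matrix n n R}
    (hA : IsUnit A.det) {i j : n} (hij : i ≠ j) (a b : n → R) :
    ((A.updateCol i a).updateCol j b).det =
      A.det * ((A⁻¹ *ᵥ a) i * (A⁻¹ *ᵥ b) j - (A⁻¹ *ᵥ a) j * (A⁻¹ *ᵥ b) i) := by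
  have hfactor : (A.updateCol i a).updateCol j b =
      A * ((1 : Matrix n n R).updateCol i (A⁻¹ *ᵥ a)).updateCol j (A⁻¹ *ᵥ b) := by
    rw [mul_updateCol, mul_updateCol, mul_one, mulVec_mulVec, mulVec_mulVec,
      mul_nonsing_inv A hA, one_mulVec, one_mulVec]
  rw [hfactor, det_mul, det_one_updateCol_updateCol hij]

theorem submatrix_updateCol_of_injective {l m n o α : Type*} [DecidableEq n] [DecidableEq o]
    (M : Matrix m n α) (r : l → m) {c : o → n} (hc : c.Injective) (j : o) (v : m → α) :
    (M.updateCol (c j) v).submatrix r c = (M.submatrix r c).updateCol j (v ∘ r) := by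
  ext s t
  simp only [submatrix_apply, updateCol_apply, hc.eq_iff, Function.comp_apply]

theorem det_updateCol_eq_sum {q : ℕ} (M : Matrix (Fin (q + 1)) (Fin (q + 1)) R)
    (j : Fin (q + 1)) (v : Fin (q + 1) → R) :
    (M.updateCol j v).det =
      ∑ i : Fin (q + 1), (-1) ^ (i + j : ℕ) * v i * (M.submatrix i.succAbove j.succAbove).det := by
  simp [det_succ_column _ j]

theorem det_updateCol_single {q : ℕ} (M : Matrix (Fin (q + 1)) (Fin (q + 1)) R)
    (i j : Fin (q + 1)) :
    (M.updateCol j (Pi.single i 1)).det =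
      (-1) ^ (i + j : ℕ) * (M.submatrix i.succAbove j.succAbove).det := by
  simp [det_updateCol_eq_sum, Pi.single_apply]

theorem det_eq_zero_of_forall_le_of_le {ι : Type*} [Fintype ι] [LinearOrder ι]
    (M : Matrix ι ι R) (t : ι) (h : ∀ r c, t ≤ r → c ≤ t → M r c = 0) : M.det = 0 := by
  -- `M` is block triangular for the split `≤ t` / `> t`, and row `t` of the first block vanishes
  rw [twoBlockTriangular_det M (· ≤ t) fun r hr c hc => h r c (not_le.mp hr).le hc,
    det_eq_zero_of_row_eq_zero (⟨t, le_rfl⟩ : {r // r ≤ t}) fun c => h t c le_rfl c.2, zero_mul]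

theorem BlockTriangular.det_submatrix_eq_zero {ι κ : Type*} [Fintype κ]
    [LinearOrder ι] [LinearOrder κ] {A : Matrix ι ι R} (hA : A.BlockTriangular id)
    {r c : κ → ι} (hr : Monotone r) (hc : Monotone c) {t : κ} (ht : c t < r t) :
    (A.submatrix r c).det = 0 :=
  det_eq_zero_of_forall_le_of_le _ t fun _ _ hs hu =>
    hA ((hc hu).trans_lt (ht.trans_le (hr hs)))

end Matrix

open Fin Finset in
theorem inv_lastCol_twoByTwo_eq_sum_det_mul_det {R : Type*} [CommRing R] {p : ℕ}
    (A B : Matrix (Fin (p + 2)) (Fin (p + 2)) R) (hA : A.det = 1) (hB : B.det = 1)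
    (k : Fin (p + 1)) :
    A⁻¹ k.castSucc (last _) * (B * A)⁻¹ k.succ (last _) -
        (B * A)⁻¹ k.castSucc (last _) * A⁻¹ k.succ (last _) =
      ∑ m : Fin (p + 1),
        (A.submatrix (castSucc ∘ m.succAbove) (k.castSucc.succAbove ∘ k.succAbove)).det *
          (B.submatrix castSucc m.castSucc.succAbove).det := by
  set w := B⁻¹ *ᵥ Pi.single (last _) 1
  have hcramer : A⁻¹ k.castSucc (last _) * (B * A)⁻¹ k.succ (last _) -
        (B * A)⁻¹ k.castSucc (last _) * A⁻¹ k.succ (last _) =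
      ((A.updateCol k.castSucc (Pi.single (last _) 1)).updateCol k.succ w).det := by
    rw [det_updateCol_updateCol (hA ▸ isUnit_one) castSucc_lt_succ.ne, hA, one_mul,
      mulVec_mulVec, ← Matrix.mul_inv_rev, mulVec_single_one, mulVec_single_one]
    simp only [col_apply]
    ring
  have hBinv : B⁻¹ = B.adjugate := by simp [Matrix.inv_def, hB]
  rw [hcramer, updateCol_comm _ castSucc_lt_succ.ne, det_updateCol_single, succAbove_last,
    ← succAbove_castSucc_self, submatrix_updateCol_of_injective _ _ succAbove_right_injective,
    det_updateCol_eq_sum, mul_sum]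
  refine sum_congr rfl fun m _ => ?_
  simp only [w, hBinv, mulVec_single_one, col_apply, adjugate_fin_succ_eq_det_submatrix,
    succAbove_last, submatrix_submatrix, val_last, val_castSucc, Function.comp_apply]
  have hsign : (-1 : R) ^ (p + 1 + k : ℕ) * (-1) ^ (m + k : ℕ) * (-1) ^ (p + 1 + m : ℕ) = 1 := by
    rw [← pow_add, ← pow_add]
    exact Even.neg_one_pow ⟨p + 1 + m + k, by ring⟩
  linear_combination
    (A.submatrix (castSucc ∘ m.succAbove) (k.castSucc.succAbove ∘ k.succAbove)).det *
      (B.submatrix castSucc m.castSucc.succAbove).det * hsign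

namespace IsTotallyPositiveUpper

open Fin

variable {K : Type*} [Field K] [LinearOrder K] [IsStrictOrderedRing K]

theorem blockTriangular {n : ℕ} {A : Matrix (Fin n) (Fin n) K} (hA : IsTotallyPositiveUpper A) :
    A.BlockTriangular id :=
  fun i j h => hA.1 i j h

theorem det_submatrix_castSucc_succAbove_pos {q : ℕ} {B : Matrix (Fin (q + 1)) (Fin (q + 1)) K}
    (hB : IsTotallyPositiveUpper B) (j : Fin (q + 1)) :
    0 < (B.submatrix castSucc j.succAbove).det :=
  hB.2 q _ _ strictMono_castSucc (strictMono_succAbove j) fun t => by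
    rw [le_def, val_castSucc, val_succAbove]
    split_ifs <;> omega

variable {p : ℕ} {A : Matrix (Fin (p + 2)) (Fin (p + 2)) K} {k m : Fin (p + 1)}

theorem det_submatrix_castSucc_comp_succAbove_pos (hA : IsTotallyPositiveUpper A) (hkm : k ≤ m) :
    0 < (A.submatrix (castSucc ∘ m.succAbove) (k.castSucc.succAbove ∘ k.succAbove)).det :=
  hA.2 p _ _ (strictMono_castSucc.comp (strictMono_succAbove m))
    ((strictMono_succAbove _).comp (strictMono_succAbove k)) fun t => by
      rw [le_def] at hkm ⊢
      simp only [Function.comp_apply, val_castSucc, val_succAbove]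
      split_ifs <;> omega

theorem det_submatrix_castSucc_comp_succAbove_eq_zero (hA : IsTotallyPositiveUpper A)
    (hmk : m < k) :
    (A.submatrix (castSucc ∘ m.succAbove) (k.castSucc.succAbove ∘ k.succAbove)).det = 0 := by
  -- row `m` of the minor is row `m + 1` of `A`, but its column `m` is column `m` of `A`
  have hm : (m : ℕ) < p := by omega
  refine hA.blockTriangular.det_submatrix_eq_zero
    (strictMono_castSucc.comp (strictMono_succAbove m)).monotone
    ((strictMono_succAbove _).comp (strictMono_succAbove k)).monotone (t := ⟨m, hm⟩) ?_
  rw [lt_def] at hmk ⊢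
  simp only [Function.comp_apply, val_castSucc, val_succAbove]
  split_ifs <;> omega

theorem det_submatrix_castSucc_comp_succAbove_nonneg (hA : IsTotallyPositiveUpper A) :
    0 ≤ (A.submatrix (castSucc ∘ m.succAbove) (k.castSucc.succAbove ∘ k.succAbove)).det := by
  rcases le_or_gt k m with hkm | hmk
  · exact (hA.det_submatrix_castSucc_comp_succAbove_pos hkm).le
  · exact (hA.det_submatrix_castSucc_comp_succAbove_eq_zero hmk).ge

end IsTotallyPositiveUpper

open Finset in
/-- For totally positive upper triangular matrices `A`, `B` of determinant one,
`(A⁻¹)_{k,n} · ((BA)⁻¹)_{k+1,n} − ((BA)⁻¹)_{k,n} · (A⁻¹)_{k+1,n} > 0`. -/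
theorem inv_lastCol_twoByTwo_pos_of_totallyPositiveUpper
    {K : Type*} [Field K] [LinearOrder K] [IsStrictOrderedRing K] {n : ℕ}
    (A B : Matrix (Fin n) (Fin n) K)
    (hA : IsTotallyPositiveUpper A) (hB : IsTotallyPositiveUpper B)
    (hA1 : A.det = 1) (hB1 : B.det = 1)
    (k : ℕ) (hk : k + 1 < n) :
    0 < A⁻¹ ⟨k, by omega⟩ ⟨n - 1, by omega⟩ * (B * A)⁻¹ ⟨k + 1, hk⟩ ⟨n - 1, by omega⟩ -
      (B * A)⁻¹ ⟨k, by omega⟩ ⟨n - 1, by omega⟩ * A⁻¹ ⟨k + 1, hk⟩ ⟨n - 1, by omega⟩ := by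
  obtain ⟨p, rfl⟩ : ∃ p, n = p + 2 := ⟨n - 2, by omega⟩
  have hsum := inv_lastCol_twoByTwo_eq_sum_det_mul_det A B hA1 hB1 ⟨k, by omega⟩
  refine lt_of_lt_of_eq (sum_pos' (fun m _ => ?_) ⟨⟨k, by omega⟩, mem_univ _, ?_⟩) hsum.symm
  · exact mul_nonneg hA.det_submatrix_castSucc_comp_succAbove_nonneg
      (hB.det_submatrix_castSucc_succAbove_pos _).le
  · exact mul_pos (hA.det_submatrix_castSucc_comp_succAbove_pos le_rfl)
      (hB.det_submatrix_castSucc_succAbove_pos _)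
end
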